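/- arXiv:2208.03864 — 3 statements merged into one kernel-verified Lean document; each statement's English description precedes it below -/
import Mathlib

section
/- Let n = 2t and let E₁, …, E_s (1 ≤ s ≤ 2^t) be 𝔽₂-subspaces of 𝔽₂ⁿ, each of dimension t, with Eᵢ ∩ Eⱼ = {0} for all i ≠ j. Let f : 𝔽₂ⁿ → 𝔽₂ be f(x) = ∑_{i=1}^{s} 1_{Eᵢ}(x) (sum taken in 𝔽₂). Then the Walsh–Hadamard transform of f satisfies: W_f(0) = 2ⁿ − 2s(2^t−1) − 2f(0); W_f(ν) = −2^{t+1} + 2s − 2f(0) for every ν ∈ (⋃_{i=1}^{s} Eᵢ^⊥)∖{0}; and W_f(ν) = 2s − 2f(0) for every other ν ∈ 𝔽₂ⁿ. Here f(0) is read as the integer 0 or 1 (and equals s mod 2). -/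
def dotp {n : ℕ} (v x : Fin n → ZMod 2) : ZMod 2 := ∑ i, v i * x i

def wht {n : ℕ} (f : (Fin n → ZMod 2) → ZMod 2) (ν : Fin n → ZMod 2) : ℤ :=
  ∑ x : Fin n → ZMod 2, (-1 : ℤ) ^ (f x + dotp ν x).val

def whtF {n m : ℕ} (F : (Fin n → ZMod 2) → (Fin m → ZMod 2))
    (μ : Fin m → ZMod 2) (ν : Fin n → ZMod 2) : ℤ :=
  wht (fun x => dotp μ (F x)) ν

def cw {n m : ℕ} (F : (Fin n → ZMod 2) → (Fin m → ZMod 2))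
    (μ : Fin m → ZMod 2) (ν : Fin n → ZMod 2) :
    {x : Fin n → ZMod 2 // x ≠ 0} → ZMod 2 :=
  fun x => dotp μ (F x.1) + dotp ν x.1

def codeF {n m : ℕ} (F : (Fin n → ZMod 2) → (Fin m → ZMod 2)) :
    Set ({x : Fin n → ZMod 2 // x ≠ 0} → ZMod 2) :=
  Set.range fun p : (Fin m → ZMod 2) × (Fin n → ZMod 2) => cw F p.1 p.2

def wt {n : ℕ} (c : {x : Fin n → ZMod 2 // x ≠ 0} → ZMod 2) : ℕ :=
  (Finset.univ.filter fun x => c x = 1).card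

def IsMinimal {n : ℕ} (C : Set ({x : Fin n → ZMod 2 // x ≠ 0} → ZMod 2)) : Prop :=
  ∀ c ∈ C, ∀ c' ∈ C, c ≠ 0 → c' ≠ 0 →
    {x | c' x = 1} ⊆ {x | c x = 1} → c' = c

def weights {n m : ℕ} (F : (Fin n → ZMod 2) → (Fin m → ZMod 2)) : Set ℕ :=
  {w | ∃ c ∈ codeF F, c ≠ 0 ∧ wt c = w}

def dualS {n : ℕ} (E : Submodule (ZMod 2) (Fin n → ZMod 2)) : Set (Fin n → ZMod 2) :=
  {ν | ∀ x ∈ E, dotp ν x = 0}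


open Finset

private lemma sign_add (a b : ZMod 2) :
    (-1:ℤ)^(a+b).val = (-1:ℤ)^a.val * (-1:ℤ)^b.val := by revert a b; decide

private lemma sign_val (a : ZMod 2) : (-1:ℤ)^a.val = 1 - 2 * a.val := by revert a; decide

private lemma sign_ne (a : ZMod 2) (h : a ≠ 0) : (-1:ℤ)^a.val = -1 := by revert a; decide

private lemma dotp_add {n : ℕ} (ν x y : Fin n → ZMod 2) :
    dotp ν (x + y) = dotp ν x + dotp ν y := by
  simp [dotp, mul_add, Finset.sum_add_distrib]

private lemma dotp_zero {n : ℕ} (ν : Fin n → ZMod 2) : dotp ν 0 = 0 := by simp [dotp]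

private lemma dotp_single {n : ℕ} (ν : Fin n → ZMod 2) (k : Fin n) :
    dotp ν (Pi.single k 1) = ν k := by
  simp [dotp, Pi.single_apply, mul_ite, Finset.sum_ite_eq']

private lemma forall_dotp_eq_zero {n : ℕ} {ν : Fin n → ZMod 2}
    (h : ∀ x, dotp ν x = 0) : ν = 0 := by
  funext k; have := h (Pi.single k 1); rw [dotp_single] at this; simpa using this

open scoped Classical in
private lemma char_sum {n : ℕ} (E : Submodule (ZMod 2) (Fin n → ZMod 2))
    (ν : Fin n → ZMod 2) :
    ∑ x ∈ univ.filter (· ∈ E), (-1:ℤ)^(dotp ν x).val =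
      if ∀ x ∈ E, dotp ν x = 0 then ((univ.filter (· ∈ E)).card : ℤ) else 0 := by
  split_ifs with h
  · rw [Finset.sum_congr rfl (fun x hx => ?_), Finset.sum_const, nsmul_eq_mul, mul_one]
    rw [h x (by simpa using hx)]; rfl
  · push_neg at h
    obtain ⟨y, hy, hdy⟩ := h
    have hyy : y + y = 0 := by
      funext i; exact CharTwo.add_self_eq_zero _
    have key : ∑ x ∈ univ.filter (· ∈ E), (-1:ℤ)^(dotp ν (x + y)).val
        = ∑ x ∈ univ.filter (· ∈ E), (-1:ℤ)^(dotp ν x).val := by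
      refine Finset.sum_nbij' (fun x => x + y) (fun x => x + y) ?_ ?_ ?_ ?_ ?_
      · intro a ha; simp only [mem_filter, mem_univ, true_and] at ha ⊢
        exact E.add_mem ha hy
      · intro a ha; simp only [mem_filter, mem_univ, true_and] at ha ⊢
        exact E.add_mem ha hy
      · intro a _; show a + y + y = a; rw [add_assoc, hyy, add_zero]
      · intro a _; show a + y + y = a; rw [add_assoc, hyy, add_zero]
      · intro a _; rfl
    have flip : ∀ x : Fin n → ZMod 2, (-1:ℤ)^(dotp ν (x + y)).val = -(-1:ℤ)^(dotp ν x).val := by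
      intro x; rw [dotp_add, sign_add, sign_ne _ hdy]; ring
    rw [Finset.sum_congr rfl (fun x _ => flip x), Finset.sum_neg_distrib] at key
    linarith

open scoped Classical in
private lemma char_sum_full {n : ℕ} (ν : Fin n → ZMod 2) :
    ∑ x : Fin n → ZMod 2, (-1:ℤ)^(dotp ν x).val = if ν = 0 then (2:ℤ)^n else 0 := by
  have h := char_sum (⊤ : Submodule (ZMod 2) (Fin n → ZMod 2)) ν
  have hfil : (univ.filter (· ∈ (⊤ : Submodule (ZMod 2) (Fin n → ZMod 2)))) = univ := by simp
  rw [hfil] at h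
  rw [h]
  have hcard : ((univ : Finset (Fin n → ZMod 2)).card : ℤ) = (2:ℤ)^n := by
    rw [Finset.card_univ]
    simp [Fintype.card_fun, ZMod.card]
  by_cases hν : ν = 0
  · rw [if_pos hν, if_pos, hcard]
    intro x _; rw [hν]; simp [dotp]
  · rw [if_neg hν, if_neg]
    intro hall
    exact hν (forall_dotp_eq_zero fun x => hall x trivial)

open scoped Classical in
private lemma wht_main {t n s : ℕ} (hn : n = 2 * t)
    (E : Fin s → Submodule (ZMod 2) (Fin n → ZMod 2))
    (hdim : ∀ i, Module.finrank (ZMod 2) (E i) = t)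
    (hint : ∀ i j, i ≠ j → E i ⊓ E j = ⊥)
    (f : (Fin n → ZMod 2) → ZMod 2)
    (hf : ∀ x, f x = ∑ i : Fin s, (if x ∈ E i then (1 : ZMod 2) else 0))
    (ν : Fin n → ZMod 2) :
    wht f ν = (1 - 2*((f 0).val:ℤ)) + ((if ν = 0 then (2:ℤ)^n else 0) - 1)
      - 2 * ((2:ℤ)^t * ((univ.filter fun i => ∀ x ∈ E i, dotp ν x = 0).card : ℤ) - s) := by
  -- cardinality of each E i
  have hcardE : ∀ i, ((univ.filter (· ∈ E i)).card : ℤ) = (2:ℤ)^t := by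
    intro i
    have h1 : Fintype.card {x : Fin n → ZMod 2 // x ∈ E i} = 2 ^ t := by
      have h0 := Module.card_eq_pow_finrank (K := ZMod 2) (V := E i)
      rw [ZMod.card, hdim i] at h0
      exact h0
    rw [← Fintype.card_subtype, h1]
    push_cast; ring
  -- each nonzero x lies in at most one E i
  have hNle : ∀ x : Fin n → ZMod 2, x ≠ 0 → (univ.filter fun i => x ∈ E i).card ≤ 1 := by
    intro x hx
    refine Finset.card_le_one.mpr (fun i hi j hj => ?_)
    by_contra hij
    simp only [mem_filter, mem_univ, true_and] at hi hj
    have hmem : x ∈ E i ⊓ E j := ⟨hi, hj⟩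
    rw [hint i j hij] at hmem
    exact hx (by simpa using hmem)
  have hsign : ∀ x : Fin n → ZMod 2, x ≠ 0 →
      (-1:ℤ)^(f x).val = 1 - 2 * ((univ.filter fun i => x ∈ E i).card : ℤ) := by
    intro x hx
    have hfx : f x = (((univ.filter fun i => x ∈ E i).card : ℕ) : ZMod 2) := by
      rw [hf x, Finset.sum_boole]
    rcases Nat.le_one_iff_eq_zero_or_eq_one.mp (hNle x hx) with h | h <;>
      rw [h] at hfx <;> rw [h] <;> rw [hfx] <;> norm_num [ZMod.val_one]
  -- split off the x = 0 term
  have hsplit : wht f ν = (-1:ℤ)^(f 0).val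
      + ∑ x ∈ univ.erase 0, (-1:ℤ)^(f x + dotp ν x).val := by
    rw [wht]
    rw [← Finset.add_sum_erase univ _ (mem_univ (0 : Fin n → ZMod 2))]
    congr 2
    rw [dotp_zero, add_zero]
  -- rewrite each nonzero term
  have step1 : ∀ x ∈ univ.erase (0 : Fin n → ZMod 2),
      (-1:ℤ)^(f x + dotp ν x).val
        = (-1:ℤ)^(dotp ν x).val
          - 2 * ∑ i : Fin s, (if x ∈ E i then (-1:ℤ)^(dotp ν x).val else 0) := by
    intro x hx
    have hx0 : x ≠ 0 := (Finset.mem_erase.mp hx).1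
    rw [sign_add, hsign x hx0]
    have hite : ∑ i : Fin s, (if x ∈ E i then (-1:ℤ)^(dotp ν x).val else 0)
        = ((univ.filter fun i => x ∈ E i).card : ℤ) * (-1:ℤ)^(dotp ν x).val := by
      rw [← Finset.sum_filter, Finset.sum_const, nsmul_eq_mul]
    rw [hite]; ring
  rw [hsplit, Finset.sum_congr rfl step1, Finset.sum_sub_distrib]
  -- first sum over erase
  have hfull : ∑ x ∈ univ.erase (0 : Fin n → ZMod 2), (-1:ℤ)^(dotp ν x).val
      = (if ν = 0 then (2:ℤ)^n else 0) - 1 := by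
    rw [Finset.sum_erase_eq_sub (mem_univ _), char_sum_full, dotp_zero]
    rfl
  -- second sum
  have hsecond : ∑ x ∈ univ.erase (0 : Fin n → ZMod 2),
      2 * ∑ i : Fin s, (if x ∈ E i then (-1:ℤ)^(dotp ν x).val else 0)
      = 2 * ((2:ℤ)^t * ((univ.filter fun i => ∀ x ∈ E i, dotp ν x = 0).card : ℤ) - s) := by
    rw [← Finset.mul_sum]
    congr 1
    rw [Finset.sum_comm]
    have hinner : ∀ i : Fin s,
        ∑ x ∈ univ.erase (0 : Fin n → ZMod 2), (if x ∈ E i then (-1:ℤ)^(dotp ν x).val else 0)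
        = (if ∀ x ∈ E i, dotp ν x = 0 then (2:ℤ)^t else 0) - 1 := by
      intro i
      rw [← Finset.sum_filter, Finset.filter_erase,
        Finset.sum_erase_eq_sub (by simp [Submodule.zero_mem]), char_sum, dotp_zero]
      rcases em (∀ x ∈ E i, dotp ν x = 0) with h | h
      · rw [if_pos h, if_pos h, hcardE i]; rfl
      · rw [if_neg h, if_neg h]; rfl
    rw [Finset.sum_congr rfl (fun i _ => hinner i), Finset.sum_sub_distrib,
      Finset.sum_const, Finset.card_univ, Fintype.card_fin, nsmul_eq_mul, mul_one]
    congr 1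
    rw [← Finset.sum_filter, Finset.sum_const, nsmul_eq_mul, mul_comm]
  rw [hfull, hsecond]
  rw [sign_val]
  ring

open scoped Classical in
private lemma dual_card_le_one {t n s : ℕ} (hn : n = 2 * t)
    (E : Fin s → Submodule (ZMod 2) (Fin n → ZMod 2))
    (hdim : ∀ i, Module.finrank (ZMod 2) (E i) = t)
    (hint : ∀ i j, i ≠ j → E i ⊓ E j = ⊥)
    {ν : Fin n → ZMod 2} (hν : ν ≠ 0) :
    (univ.filter fun i => ∀ x ∈ E i, dotp ν x = 0).card ≤ 1 := by
  refine Finset.card_le_one.mpr (fun i hi j hj => ?_)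
  by_contra hij
  simp only [mem_filter, mem_univ, true_and] at hi hj
  have hsup : E i ⊔ E j = ⊤ := by
    apply Submodule.eq_top_of_finrank_eq
    have h1 := Submodule.finrank_sup_add_finrank_inf_eq (E i) (E j)
    rw [hint i j hij, finrank_bot, add_zero, hdim i, hdim j] at h1
    rw [Module.finrank_pi, Fintype.card_fin]
    omega
  apply hν
  apply forall_dotp_eq_zero
  intro x
  have hx : x ∈ E i ⊔ E j := hsup ▸ Submodule.mem_top
  obtain ⟨a, ha, b, hb, rfl⟩ := Submodule.mem_sup.mp hx
  rw [dotp_add, hi a ha, hj b hb, add_zero]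

open scoped Classical in
theorem stmt11 (t n s : ℕ) (hn : n = 2 * t) (hs1 : 1 ≤ s) (hs2 : s ≤ 2 ^ t)
    (E : Fin s → Submodule (ZMod 2) (Fin n → ZMod 2))
    (hdim : ∀ i, Module.finrank (ZMod 2) (E i) = t)
    (hint : ∀ i j, i ≠ j → E i ⊓ E j = ⊥)
    (f : (Fin n → ZMod 2) → ZMod 2)
    (hf : ∀ x, f x = ∑ i : Fin s, (if x ∈ E i then (1 : ZMod 2) else 0)) :
    f 0 = (s : ZMod 2) ∧
    wht f 0 = 2 ^ n - 2 * s * (2 ^ t - 1) - 2 * ((f 0).val : ℤ) ∧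
    (∀ ν : Fin n → ZMod 2, ν ≠ 0 → ν ∈ ⋃ i : Fin s, dualS (E i) →
      wht f ν = -2 ^ (t + 1) + 2 * s - 2 * ((f 0).val : ℤ)) ∧
    (∀ ν : Fin n → ZMod 2, ν ∉ ⋃ i : Fin s, dualS (E i) →
      wht f ν = 2 * s - 2 * ((f 0).val : ℤ)) := by
  have hf0 : f 0 = (s : ZMod 2) := by
    rw [hf]
    simp [Submodule.zero_mem]
  refine ⟨hf0, ?_, ?_, ?_⟩
  · have h := wht_main hn E hdim hint f hf 0
    rw [if_pos rfl] at h
    have hcard : (Finset.univ.filter fun i : Fin s =>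
        ∀ x ∈ E i, dotp (0 : Fin n → ZMod 2) x = 0) = Finset.univ := by
      refine Finset.filter_true_of_mem (fun i _ => fun x _ => ?_)
      simp [dotp]
    rw [hcard, Finset.card_univ, Fintype.card_fin] at h
    rw [h]; ring
  · intro ν hν hmem
    have h := wht_main hn E hdim hint f hf ν
    rw [if_neg hν] at h
    have hge : 1 ≤ (Finset.univ.filter fun i : Fin s => ∀ x ∈ E i, dotp ν x = 0).card := by
      obtain ⟨i, hi⟩ := Set.mem_iUnion.mp hmem
      exact Finset.card_pos.mpr ⟨i, Finset.mem_filter.mpr ⟨Finset.mem_univ i, hi⟩⟩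
    have hcard : (Finset.univ.filter fun i : Fin s => ∀ x ∈ E i, dotp ν x = 0).card = 1 :=
      le_antisymm (dual_card_le_one hn E hdim hint hν) hge
    rw [hcard] at h
    rw [h, pow_succ]; push_cast; ring
  · intro ν hmem
    have hν : ν ≠ 0 := by
      rintro rfl
      exact hmem (Set.mem_iUnion.mpr ⟨⟨0, hs1⟩, fun x _ => by simp [dotp]⟩)
    have h := wht_main hn E hdim hint f hf ν
    rw [if_neg hν] at h
    have hcard : (Finset.univ.filter fun i : Fin s => ∀ x ∈ E i, dotp ν x = 0).card = 0 := by
      rw [Finset.card_eq_zero, Finset.filter_eq_empty_iff]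
      intro i _ hi
      exact hmem (Set.mem_iUnion.mpr ⟨i, hi⟩)
    rw [hcard] at h
    rw [h]; push_cast; ring
end

section
/- Let n = 2t with t ≥ 2, let E be a t-dimensional 𝔽₂-subspace of 𝔽₂ⁿ, and let a, b ∈ 𝔽₂ⁿ∖{0} with a ≠ b. Define f : 𝔽₂ⁿ → 𝔽₂ by f(x) = 1_E(x) + (a·x)(b·x) + 1. Then f satisfies the condition that W_f(ν) + W_f(ν') ≠ 2ⁿ and W_f(ν) − W_f(ν') ≠ 2ⁿ for all ν ≠ ν' in 𝔽₂ⁿ, if and only if a ∉ E^⊥, b ∉ E^⊥, and a+b ∉ E^⊥. -/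
namespace Stmt14Aux

noncomputable section
open Classical

variable {n : ℕ}

def chi (u : ZMod 2) : ℤ := (-1) ^ u.val

lemma chi_add (u v : ZMod 2) : chi (u + v) = chi u * chi v := by revert u v; decide

lemma dotp_add_left (u v x : Fin n → ZMod 2) :
    dotp (u + v) x = dotp u x + dotp v x := by
  simp [dotp, add_mul, Finset.sum_add_distrib]

lemma dotp_add_right (u x y : Fin n → ZMod 2) :
    dotp u (x + y) = dotp u x + dotp u y := by
  simp [dotp, mul_add, Finset.sum_add_distrib]

lemma dotp_zero_left (x : Fin n → ZMod 2) : dotp (0 : Fin n → ZMod 2) x = 0 := by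
  simp [dotp]

lemma addself (u : Fin n → ZMod 2) : u + u = 0 := by
  funext i
  have h : ∀ z : ZMod 2, z + z = 0 := by decide
  simpa using h (u i)

lemma cancel_left (u v : Fin n → ZMod 2) : u + (u + v) = v := by
  rw [← add_assoc, addself, zero_add]

lemma add_eq_zero_iff' (u v : Fin n → ZMod 2) : u + v = 0 ↔ u = v := by
  constructor
  · intro h
    have h2 : u + v + v = v := by rw [h, zero_add]
    rwa [add_assoc, addself, add_zero] at h2
  · rintro rfl; exact addself u

lemma add_add_cancel (u v w : Fin n → ZMod 2) : (u + w) + (v + w) = u + v := by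
  rw [add_add_add_comm, addself, add_zero]

lemma sum_chi (μ : Fin n → ZMod 2) :
    ∑ x : Fin n → ZMod 2, chi (dotp μ x) = if μ = 0 then (2 : ℤ) ^ n else 0 := by
  split_ifs with h
  · subst h
    simp [dotp_zero_left, chi, Fintype.card_fun]
  · obtain ⟨i, hi⟩ : ∃ i, μ i ≠ 0 := by
      by_contra hc; push_neg at hc; exact h (funext hc)
    have hμi : μ i = 1 := by
      revert hi; generalize μ i = z; revert z; decide
    set x₀ : Fin n → ZMod 2 := Pi.single i 1 with hx₀
    have hd : dotp μ x₀ = 1 := by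
      rw [dotp]
      rw [Finset.sum_eq_single i]
      · simp [hx₀, hμi]
      · intro j _ hj; simp [hx₀, Pi.single_apply, hj]
      · simp
    have hbij := Fintype.sum_equiv (Equiv.addRight x₀)
      (fun x => chi (dotp μ (x + x₀))) (fun x => chi (dotp μ x)) (fun x => rfl)
    have hneg : ∀ x : Fin n → ZMod 2, chi (dotp μ (x + x₀)) = - chi (dotp μ x) := by
      intro x
      rw [dotp_add_right, chi_add, hd]
      have h1 : chi 1 = -1 := by decide
      rw [h1]; ring
    have hz : ∑ x : Fin n → ZMod 2, chi (dotp μ x)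
        = - ∑ x : Fin n → ZMod 2, chi (dotp μ x) := by
      calc ∑ x : Fin n → ZMod 2, chi (dotp μ x)
          = ∑ x : Fin n → ZMod 2, chi (dotp μ (x + x₀)) := hbij.symm
        _ = ∑ x : Fin n → ZMod 2, - chi (dotp μ x) := by simp_rw [hneg]
        _ = - ∑ x : Fin n → ZMod 2, chi (dotp μ x) := by rw [Finset.sum_neg_distrib]
    linarith

lemma sum_chi_E {t : ℕ} (E : Submodule (ZMod 2) (Fin n → ZMod 2))
    (hdim : Module.finrank (ZMod 2) E = t) (μ : Fin n → ZMod 2) :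
    ∑ x : Fin n → ZMod 2, (if x ∈ E then (1 : ℤ) else 0) * chi (dotp μ x)
      = if μ ∈ dualS E then (2 : ℤ) ^ t else 0 := by
  have hsub : ∑ x : Fin n → ZMod 2, (if x ∈ E then (1 : ℤ) else 0) * chi (dotp μ x)
      = ∑ x : E, chi (dotp μ (x : Fin n → ZMod 2)) := by
    rw [← Finset.sum_subtype (Finset.univ.filter (· ∈ E))
      (by simp) (fun x => chi (dotp μ x))]
    rw [Finset.sum_filter]
    congr 1; funext x; split_ifs <;> simp
  rw [hsub]
  split_ifs with h
  · have hall : ∀ x : E, chi (dotp μ (x : Fin n → ZMod 2)) = 1 := by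
      intro x; rw [h x.1 x.2]; decide
    simp_rw [hall]
    simp only [Finset.sum_const, Finset.card_univ, smul_eq_mul, mul_one]
    have hcard : Fintype.card E = 2 ^ t := by
      rw [Module.card_eq_pow_finrank (K := ZMod 2) (V := E), ZMod.card, hdim]
    rw [hcard]; norm_num
  · obtain ⟨y, hyE, hy⟩ : ∃ y ∈ E, dotp μ y ≠ 0 := by
      by_contra hc; push_neg at hc; exact h hc
    have hy1 : dotp μ y = 1 := by
      revert hy; generalize dotp μ y = z; revert z; decide
    set y₀ : E := ⟨y, hyE⟩ with hy₀
    have hbij := Fintype.sum_equiv (Equiv.addRight y₀)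
      (fun x : E => chi (dotp μ ((x + y₀ : E) : Fin n → ZMod 2)))
      (fun x : E => chi (dotp μ (x : Fin n → ZMod 2))) (fun x => rfl)
    have hneg : ∀ x : E, chi (dotp μ ((x + y₀ : E) : Fin n → ZMod 2))
        = - chi (dotp μ (x : Fin n → ZMod 2)) := by
      intro x
      have hcoe : ((x + y₀ : E) : Fin n → ZMod 2) = (x : Fin n → ZMod 2) + y := rfl
      rw [hcoe, dotp_add_right, chi_add, hy1]
      have h1 : chi 1 = -1 := by decide
      rw [h1]; ring
    have hz : ∑ x : E, chi (dotp μ (x : Fin n → ZMod 2))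
        = - ∑ x : E, chi (dotp μ (x : Fin n → ZMod 2)) := by
      calc ∑ x : E, chi (dotp μ (x : Fin n → ZMod 2))
          = ∑ x : E, chi (dotp μ ((x + y₀ : E) : Fin n → ZMod 2)) := hbij.symm
        _ = ∑ x : E, - chi (dotp μ (x : Fin n → ZMod 2)) := by simp_rw [hneg]
        _ = - ∑ x : E, chi (dotp μ (x : Fin n → ZMod 2)) := by
            rw [Finset.sum_neg_distrib]
    linarith

lemma wht_formula {t : ℕ} (hn : n = 2 * t) (ht : 1 ≤ t)
    (E : Submodule (ZMod 2) (Fin n → ZMod 2))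
    (hdim : Module.finrank (ZMod 2) E = t)
    (a b : Fin n → ZMod 2) (f : (Fin n → ZMod 2) → ZMod 2)
    (hf : ∀ x, f x = (if x ∈ E then (1 : ZMod 2) else 0) + dotp a x * dotp b x + 1)
    (ν : Fin n → ZMod 2) :
    wht f ν = -(2 : ℤ) ^ (n - 1) *
        ((if ν = a then (1:ℤ) else 0) + (if ν = b then (1:ℤ) else 0)
          + (if ν = 0 then (1:ℤ) else 0) - (if ν = a + b then (1:ℤ) else 0))
      + (2 : ℤ) ^ t *
        ((if a + ν ∈ dualS E then (1:ℤ) else 0) + (if b + ν ∈ dualS E then (1:ℤ) else 0)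
          + (if ν ∈ dualS E then (1:ℤ) else 0)
          - (if a + b + ν ∈ dualS E then (1:ℤ) else 0)) := by
  have key : ∀ x, (2:ℤ) * (-1 : ℤ) ^ ((f x + dotp ν x).val)
      = (2 * (if x ∈ E then (1:ℤ) else 0) - 1) *
        (chi (dotp (a + ν) x) + chi (dotp (b + ν) x) + chi (dotp ν x)
          - chi (dotp (a + b + ν) x)) := by
    intro x
    rw [hf x]
    simp only [dotp_add_left]
    split_ifs with hx
    · generalize dotp a x = p; generalize dotp b x = q; generalize dotp ν x = r
      revert p q r; decide
    · generalize dotp a x = p; generalize dotp b x = q; generalize dotp ν x = r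
      revert p q r; decide
  have T1 : ∑ x : Fin n → ZMod 2, chi (dotp (a + ν) x)
      = (2:ℤ)^n * (if ν = a then (1:ℤ) else 0) := by
    rw [sum_chi, mul_ite, mul_one, mul_zero]
    exact if_congr ((add_eq_zero_iff' a ν).trans eq_comm) rfl rfl
  have T2 : ∑ x : Fin n → ZMod 2, chi (dotp (b + ν) x)
      = (2:ℤ)^n * (if ν = b then (1:ℤ) else 0) := by
    rw [sum_chi, mul_ite, mul_one, mul_zero]
    exact if_congr ((add_eq_zero_iff' b ν).trans eq_comm) rfl rfl
  have T3 : ∑ x : Fin n → ZMod 2, chi (dotp ν x)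
      = (2:ℤ)^n * (if ν = 0 then (1:ℤ) else 0) := by
    rw [sum_chi, mul_ite, mul_one, mul_zero]
  have T4 : ∑ x : Fin n → ZMod 2, chi (dotp (a + b + ν) x)
      = (2:ℤ)^n * (if ν = a + b then (1:ℤ) else 0) := by
    rw [sum_chi, mul_ite, mul_one, mul_zero]
    exact if_congr ((add_eq_zero_iff' (a+b) ν).trans eq_comm) rfl rfl
  have S1 := sum_chi_E E hdim (a + ν)
  have S2 := sum_chi_E E hdim (b + ν)
  have S3 := sum_chi_E E hdim ν
  have S4 := sum_chi_E E hdim (a + b + ν)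
  have S1' : ∑ x : Fin n → ZMod 2, (if x ∈ E then (1:ℤ) else 0) * chi (dotp (a+ν) x)
      = (2:ℤ)^t * (if a + ν ∈ dualS E then (1:ℤ) else 0) := by rw [S1]; split_ifs <;> ring
  have S2' : ∑ x : Fin n → ZMod 2, (if x ∈ E then (1:ℤ) else 0) * chi (dotp (b+ν) x)
      = (2:ℤ)^t * (if b + ν ∈ dualS E then (1:ℤ) else 0) := by rw [S2]; split_ifs <;> ring
  have S3' : ∑ x : Fin n → ZMod 2, (if x ∈ E then (1:ℤ) else 0) * chi (dotp ν x)
      = (2:ℤ)^t * (if ν ∈ dualS E then (1:ℤ) else 0) := by rw [S3]; split_ifs <;> ring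
  have S4' : ∑ x : Fin n → ZMod 2, (if x ∈ E then (1:ℤ) else 0) * chi (dotp (a+b+ν) x)
      = (2:ℤ)^t * (if a + b + ν ∈ dualS E then (1:ℤ) else 0) := by rw [S4]; split_ifs <;> ring
  have hcalc : (2:ℤ) * wht f ν
      = 2 * ((∑ x : Fin n → ZMod 2, (if x ∈ E then (1:ℤ) else 0) * chi (dotp (a+ν) x))
          + (∑ x : Fin n → ZMod 2, (if x ∈ E then (1:ℤ) else 0) * chi (dotp (b+ν) x))
          + (∑ x : Fin n → ZMod 2, (if x ∈ E then (1:ℤ) else 0) * chi (dotp ν x))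
          - (∑ x : Fin n → ZMod 2, (if x ∈ E then (1:ℤ) else 0) * chi (dotp (a+b+ν) x)))
        - ((∑ x : Fin n → ZMod 2, chi (dotp (a+ν) x))
          + (∑ x : Fin n → ZMod 2, chi (dotp (b+ν) x))
          + (∑ x : Fin n → ZMod 2, chi (dotp ν x))
          - (∑ x : Fin n → ZMod 2, chi (dotp (a+b+ν) x))) := by
    rw [wht, Finset.mul_sum]
    have step : ∑ x : Fin n → ZMod 2, (2:ℤ) * (-1 : ℤ) ^ ((f x + dotp ν x).val)
        = ∑ x : Fin n → ZMod 2,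
            (2 * ((if x ∈ E then (1:ℤ) else 0) * chi (dotp (a+ν) x))
            + 2 * ((if x ∈ E then (1:ℤ) else 0) * chi (dotp (b+ν) x))
            + 2 * ((if x ∈ E then (1:ℤ) else 0) * chi (dotp ν x))
            - 2 * ((if x ∈ E then (1:ℤ) else 0) * chi (dotp (a+b+ν) x))
            - chi (dotp (a+ν) x) - chi (dotp (b+ν) x) - chi (dotp ν x)
            + chi (dotp (a+b+ν) x)) :=
      Finset.sum_congr rfl fun x _ => by rw [key x]; ring
    rw [step]
    simp only [Finset.sum_add_distrib, Finset.sum_sub_distrib, ← Finset.mul_sum]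
    ring
  rw [S1', S2', S3', S4', T1, T2, T3, T4] at hcalc
  have h2n : (2:ℤ)^n = 2 * 2^(n-1) := by
    rw [← pow_succ']
    congr 1
    omega
  rw [h2n] at hcalc
  linarith

def If (E : Submodule (ZMod 2) (Fin n → ZMod 2)) (μ : Fin n → ZMod 2) : ℤ :=
  if μ ∈ dualS E then 1 else 0

def Cf (a b ν : Fin n → ZMod 2) : ℤ :=
  (if ν = a then 1 else 0) + (if ν = b then 1 else 0)
    + (if ν = 0 then 1 else 0) - (if ν = a + b then 1 else 0)

def Mf (E : Submodule (ZMod 2) (Fin n → ZMod 2)) (a b ν : Fin n → ZMod 2) : ℤ :=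
  If E (a + ν) + If E (b + ν) + If E ν - If E (a + b + ν)

lemma zero_mem_dualS (E : Submodule (ZMod 2) (Fin n → ZMod 2)) :
    (0 : Fin n → ZMod 2) ∈ dualS E := fun x _ => dotp_zero_left x

lemma dualS_add {E : Submodule (ZMod 2) (Fin n → ZMod 2)} {u v : Fin n → ZMod 2}
    (hu : u ∈ dualS E) (hv : v ∈ dualS E) : u + v ∈ dualS E := fun x hx => by
  rw [dotp_add_left, hu x hx, hv x hx, add_zero]

-- formula (proved in other file); stated with Cf/Mf
lemma wht_formula' {t : ℕ} (hn : n = 2 * t) (ht : 1 ≤ t)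
    (E : Submodule (ZMod 2) (Fin n → ZMod 2))
    (hdim : Module.finrank (ZMod 2) E = t)
    (a b : Fin n → ZMod 2) (f : (Fin n → ZMod 2) → ZMod 2)
    (hf : ∀ x, f x = (if x ∈ E then (1 : ZMod 2) else 0) + dotp a x * dotp b x + 1)
    (ν : Fin n → ZMod 2) :
    wht f ν = -(2 : ℤ) ^ (n - 1) * Cf a b ν + (2 : ℤ) ^ t * Mf E a b ν := by
  simp only [Cf, Mf, If]
  exact wht_formula hn ht E hdim a b f hf ν

lemma fact_lemma {E : Submodule (ZMod 2) (Fin n → ZMod 2)}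
    {a b : Fin n → ZMod 2} (ha : a ≠ 0) (hb : b ≠ 0) (hab : a ≠ b)
    (haD : a ∉ dualS E) (hbD : b ∉ dualS E) (habD : a + b ∉ dualS E)
    (ν : Fin n → ZMod 2) :
    (Cf a b ν = -1 ∧ -1 ≤ Mf E a b ν ∧ Mf E a b ν ≤ -1) ∨
      (Cf a b ν = 1 ∧ 1 ≤ Mf E a b ν ∧ Mf E a b ν ≤ 1) ∨
      (Cf a b ν = 0 ∧ -1 ≤ Mf E a b ν ∧ Mf E a b ν ≤ 1) := by
  have hab0 : a + b ≠ 0 := fun h => hab ((add_eq_zero_iff' a b).1 h)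
  have haba : a + b ≠ a := by
    intro h
    apply hb
    have h2 := congrArg (a + ·) h
    simpa [cancel_left, addself] using h2
  have habb : a + b ≠ b := by
    intro h
    apply ha
    have h2 := congrArg (· + b) h
    simpa [add_assoc, addself] using h2
  have e1 : a + (a + b) = b := cancel_left a b
  have e2 : b + (a + b) = a := by rw [add_comm a b]; exact cancel_left b a
  have e3 : a + b + (a + b) = 0 := addself _
  have e4 : a + b + b = a := by rw [add_assoc, addself, add_zero]
  have e5 : a + b + a = b := by rw [add_comm (a + b) a]; exact e1
  have hIa : If E a = 0 := by simp [If, haD]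
  have hIb : If E b = 0 := by simp [If, hbD]
  have hIab : If E (a + b) = 0 := by simp [If, habD]
  have hI0 : If E 0 = 1 := by simp [If, zero_mem_dualS]
  by_cases hv1 : ν = a + b
  · subst hv1
    left
    refine ⟨by simp [Cf, haba, habb, hab0], ?_, ?_⟩ <;>
      · simp only [Mf, e1, e2, e3]
        rw [hIa, hIb, hIab, hI0]; norm_num
  by_cases hv2 : ν = 0
  · subst hv2
    right; left
    refine ⟨by simp [Cf, Ne.symm ha, Ne.symm hb, Ne.symm hab0], ?_, ?_⟩ <;>
      · simp only [Mf, add_zero]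
        rw [hIa, hIb, hIab, hI0]; norm_num
  by_cases hv3 : ν = a
  · rw [hv3]
    right; left
    refine ⟨by simp [Cf, hab, ha, Ne.symm haba], ?_, ?_⟩ <;>
      simp [Mf, addself, add_comm b a, e5, e4, e1, e2, e3, hIa, hIb, hIab, hI0]
  by_cases hv4 : ν = b
  · rw [hv4]
    right; left
    refine ⟨by simp [Cf, Ne.symm hab, hb, Ne.symm habb], ?_, ?_⟩ <;>
      simp [Mf, addself, add_comm b a, e5, e4, e1, e2, e3, hIa, hIb, hIab, hI0]
  · right; right
    refine ⟨by simp [Cf, hv1, hv2, hv3, hv4], ?_, ?_⟩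
    all_goals {
      have k12 : ¬(a + ν ∈ dualS E ∧ b + ν ∈ dualS E) := by
        rintro ⟨h1, h2⟩
        exact habD (by have h3 := dualS_add h1 h2; rwa [add_add_cancel] at h3)
      have k13 : ¬(a + ν ∈ dualS E ∧ ν ∈ dualS E) := by
        rintro ⟨h1, h2⟩
        exact haD (by have h3 := dualS_add h1 h2; rwa [add_assoc, addself, add_zero] at h3)
      have k23 : ¬(b + ν ∈ dualS E ∧ ν ∈ dualS E) := by
        rintro ⟨h1, h2⟩
        exact hbD (by have h3 := dualS_add h1 h2; rwa [add_assoc, addself, add_zero] at h3)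
      have hle : ∀ μ : Fin n → ZMod 2, (0:ℤ) ≤ If E μ ∧ If E μ ≤ 1 := by
        intro μ; unfold If; split_ifs <;> norm_num
      have key : If E (a + ν) + If E (b + ν) + If E ν ≤ 1 := by
        by_cases h1 : a + ν ∈ dualS E
        · have n2 : If E (b + ν) = 0 := by
            have hx : ¬ (b + ν ∈ dualS E) := fun h2 => k12 ⟨h1, h2⟩
            simp [If, hx]
          have n3 : If E ν = 0 := by
            have hx : ¬ (ν ∈ dualS E) := fun h3 => k13 ⟨h1, h3⟩
            simp [If, hx]
          have h4 := (hle (a + ν)).2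
          linarith
        · have n1 : If E (a + ν) = 0 := by simp [If, h1]
          by_cases h2 : b + ν ∈ dualS E
          · have n3 : If E ν = 0 := by
              have hx : ¬ (ν ∈ dualS E) := fun h3 => k23 ⟨h2, h3⟩
              simp [If, hx]
            have h4 := (hle (b + ν)).2
            linarith
          · have n2 : If E (b + ν) = 0 := by simp [If, h2]
            have h4 := (hle ν).2
            linarith
      simp only [Mf]
      linarith [key, (hle (a + ν)).1, (hle (b + ν)).1, (hle ν).1,
        (hle (a + b + ν)).1, (hle (a + b + ν)).2]
    }
end
end Stmt14Aux

open scoped Classical in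
theorem stmt14 (t n : ℕ) (hn : n = 2 * t) (ht : 2 ≤ t)
    (E : Submodule (ZMod 2) (Fin n → ZMod 2))
    (hdim : Module.finrank (ZMod 2) E = t)
    (a b : Fin n → ZMod 2) (ha : a ≠ 0) (hb : b ≠ 0) (hab : a ≠ b)
    (f : (Fin n → ZMod 2) → ZMod 2)
    (hf : ∀ x, f x = (if x ∈ E then (1 : ZMod 2) else 0) + dotp a x * dotp b x + 1) :
    (∀ ν ν' : Fin n → ZMod 2, ν ≠ ν' →
        wht f ν + wht f ν' ≠ 2 ^ n ∧ wht f ν - wht f ν' ≠ 2 ^ n) ↔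
      (a ∉ dualS E ∧ b ∉ dualS E ∧ a + b ∉ dualS E) := by
  have ht1 : 1 ≤ t := by omega
  have hW : ∀ ν, wht f ν
      = -(2:ℤ)^(n-1) * Stmt14Aux.Cf a b ν + (2:ℤ)^t * Stmt14Aux.Mf E a b ν :=
    Stmt14Aux.wht_formula' hn ht1 E hdim a b f hf
  have hab0 : a + b ≠ 0 := fun h => hab ((Stmt14Aux.add_eq_zero_iff' a b).1 h)
  have haba : a + b ≠ a := by
    intro h; apply hb
    have h2 := congrArg (a + ·) h
    simpa [Stmt14Aux.cancel_left, Stmt14Aux.addself] using h2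
  have habb : a + b ≠ b := by
    intro h; apply ha
    have h2 := congrArg (· + b) h
    simpa [add_assoc, Stmt14Aux.addself] using h2
  have h2n : (2:ℤ)^n = 2 * 2^(n-1) := by
    rw [← pow_succ']; congr 1; omega
  have hIf0 : Stmt14Aux.If E 0 = 1 := by
    simp [Stmt14Aux.If, Stmt14Aux.zero_mem_dualS]
  have eba : b + (a + b) = a := by
    rw [add_comm a b]; exact Stmt14Aux.cancel_left b a
  have eaba : a + b + a = b := by
    rw [add_comm (a + b) a]; exact Stmt14Aux.cancel_left a b
  have eabb : a + b + b = a := by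
    rw [add_assoc, Stmt14Aux.addself, add_zero]
  have hC1 : Stmt14Aux.Cf a b (a + b) = -1 := by
    simp [Stmt14Aux.Cf, haba, habb, hab0]
  constructor
  · intro hL
    refine ⟨?_, ?_, ?_⟩
    · intro haD
      refine (hL (a + b) b habb).2 ?_
      rw [hW (a + b), hW b]
      have hIfa : Stmt14Aux.If E a = 1 := by simp [Stmt14Aux.If, haD]
      have hC2 : Stmt14Aux.Cf a b b = 1 := by
        simp [Stmt14Aux.Cf, Ne.symm hab, hb, Ne.symm habb]
      have hM : Stmt14Aux.Mf E a b (a + b) = Stmt14Aux.Mf E a b b := by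
        simp only [Stmt14Aux.Mf, Stmt14Aux.cancel_left, eba, Stmt14Aux.addself, eabb]
        rw [hIfa, hIf0]; ring
      rw [hC1, hC2, hM]; linarith [h2n]
    · intro hbD
      refine (hL (a + b) a haba).2 ?_
      rw [hW (a + b), hW a]
      have hIfb : Stmt14Aux.If E b = 1 := by simp [Stmt14Aux.If, hbD]
      have hC2 : Stmt14Aux.Cf a b a = 1 := by
        simp [Stmt14Aux.Cf, hab, ha, Ne.symm haba]
      have hM : Stmt14Aux.Mf E a b (a + b) = Stmt14Aux.Mf E a b a := by
        simp only [Stmt14Aux.Mf, Stmt14Aux.cancel_left, eba, Stmt14Aux.addself, eaba,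
          add_comm b a]
        rw [hIfb, hIf0]; ring
      rw [hC1, hC2, hM]; linarith [h2n]
    · intro habD
      refine (hL (a + b) 0 hab0).2 ?_
      rw [hW (a + b), hW 0]
      have hIfab : Stmt14Aux.If E (a + b) = 1 := by simp [Stmt14Aux.If, habD]
      have hC2 : Stmt14Aux.Cf a b 0 = 1 := by
        simp [Stmt14Aux.Cf, Ne.symm ha, Ne.symm hb, Ne.symm hab0]
      have hM : Stmt14Aux.Mf E a b (a + b) = Stmt14Aux.Mf E a b 0 := by
        simp only [Stmt14Aux.Mf, Stmt14Aux.cancel_left, eba, Stmt14Aux.addself, add_zero]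
        rw [hIfab, hIf0]; ring
      rw [hC1, hC2, hM]; linarith [h2n]
  · rintro ⟨haD, hbD, habD⟩ ν ν' hne
    have hP : (2:ℤ) ≤ 2^(t-1) := by
      calc (2:ℤ) = 2^1 := (pow_one 2).symm
        _ ≤ 2^(t-1) := pow_le_pow_right₀ (by norm_num) (by omega)
    have hfact := fun μ => Stmt14Aux.fact_lemma (E := E) ha hb hab haD hbD habD μ
    have e1 : (2:ℤ)^(n-1) = 2^t * 2^(t-1) := by rw [← pow_add]; congr 1; omega
    have e2 : (2:ℤ)^n = 2^t * 2^(t-1) * 2 := by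
      rw [mul_assoc, ← pow_succ, ← pow_add]; congr 1; omega
    constructor
    · intro heq
      rw [hW ν, hW ν'] at heq
      rw [e1, e2] at heq
      have hsplit : Stmt14Aux.Mf E a b ν + Stmt14Aux.Mf E a b ν'
          = 2^(t-1) * (2 + Stmt14Aux.Cf a b ν + Stmt14Aux.Cf a b ν') := by
        apply mul_left_cancel₀ (a := (2:ℤ)^t) (pow_ne_zero t two_ne_zero)
        linear_combination heq
      rcases hfact ν with ⟨hc1, hm1, hm1'⟩ | ⟨hc1, hm1, hm1'⟩ | ⟨hc1, hm1, hm1'⟩ <;>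
        rcases hfact ν' with ⟨hc2, hm2, hm2'⟩ | ⟨hc2, hm2, hm2'⟩ | ⟨hc2, hm2, hm2'⟩ <;>
        rw [hc1, hc2] at hsplit <;>
        linarith [hP, hm1, hm1', hm2, hm2']
    · intro heq
      rw [hW ν, hW ν'] at heq
      rw [e1, e2] at heq
      have hsplit : Stmt14Aux.Mf E a b ν - Stmt14Aux.Mf E a b ν'
          = 2^(t-1) * (2 + Stmt14Aux.Cf a b ν - Stmt14Aux.Cf a b ν') := by
        apply mul_left_cancel₀ (a := (2:ℤ)^t) (pow_ne_zero t two_ne_zero)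
        linear_combination heq
      rcases hfact ν with ⟨hc1, hm1, hm1'⟩ | ⟨hc1, hm1, hm1'⟩ | ⟨hc1, hm1, hm1'⟩ <;>
        rcases hfact ν' with ⟨hc2, hm2, hm2'⟩ | ⟨hc2, hm2, hm2'⟩ | ⟨hc2, hm2, hm2'⟩ <;>
        rw [hc1, hc2] at hsplit <;>
        linarith [hP, hm1, hm1', hm2, hm2']
end

section
/- Let φ : 𝔽₂^{2t} → 𝔽₂ be a bent function, i.e. W_φ(ν) ∈ {2^t, −2^t} for every ν ∈ 𝔽₂^{2t}. Let a, b ∈ 𝔽₂^{2t} and define h : 𝔽₂^{2t} → 𝔽₂ by h(x) = φ(x) + (a·x)(b·x). Then for every ν ∈ 𝔽₂^{2t}, W_h(ν) ∈ {0, 2^t, −2^t, 2^{t+1}, −2^{t+1}}. -/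
lemma dotp_add_left {n : ℕ} (v w x : Fin n → ZMod 2) :
    dotp (v + w) x = dotp v x + dotp w x := by
  simp [dotp, add_mul, Finset.sum_add_distrib]

lemma key (s u v : ZMod 2) :
    2 * (-1 : ℤ) ^ ((s + u * v).val) =
      (-1 : ℤ) ^ s.val + (-1 : ℤ) ^ ((s + u).val) + (-1 : ℤ) ^ ((s + v).val)
        - (-1 : ℤ) ^ ((s + u + v).val) := by
  revert s u v; decide

theorem stmt15 (t : ℕ) (phi : (Fin (2 * t) → ZMod 2) → ZMod 2)
    (hbent : ∀ ν : Fin (2 * t) → ZMod 2, wht phi ν = 2 ^ t ∨ wht phi ν = -2 ^ t)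
    (a b : Fin (2 * t) → ZMod 2)
    (h : (Fin (2 * t) → ZMod 2) → ZMod 2)
    (hh : ∀ x, h x = phi x + dotp a x * dotp b x) :
    ∀ ν : Fin (2 * t) → ZMod 2,
      wht h ν = 0 ∨ wht h ν = 2 ^ t ∨ wht h ν = -2 ^ t ∨
      wht h ν = 2 ^ (t + 1) ∨ wht h ν = -2 ^ (t + 1) := by
  intro ν
  have hsum : 2 * wht h ν =
      wht phi ν + wht phi (ν + a) + wht phi (ν + b) - wht phi (ν + a + b) := by
    unfold wht
    rw [Finset.mul_sum, ← Finset.sum_add_distrib, ← Finset.sum_add_distrib, ← Finset.sum_sub_distrib]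
    refine Finset.sum_congr rfl fun x _ => ?_
    have e1 : h x + dotp ν x = (phi x + dotp ν x) + dotp a x * dotp b x := by
      rw [hh]; ring
    have e2 : phi x + dotp (ν + a) x = (phi x + dotp ν x) + dotp a x := by
      rw [dotp_add_left]; ring
    have e3 : phi x + dotp (ν + b) x = (phi x + dotp ν x) + dotp b x := by
      rw [dotp_add_left]; ring
    have e4 : phi x + dotp (ν + a + b) x = (phi x + dotp ν x) + dotp a x + dotp b x := by
      rw [dotp_add_left, dotp_add_left]; ring
    rw [e1, e2, e3, e4]
    exact key _ _ _
  have hp : (2 : ℤ) ^ (t + 1) = 2 * 2 ^ t := by ring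
  rcases hbent ν with h1 | h1 <;> rcases hbent (ν + a) with h2 | h2 <;>
    rcases hbent (ν + b) with h3 | h3 <;> rcases hbent (ν + a + b) with h4 | h4 <;>
      omega
end
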